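/- arXiv:1512.03199 — 2 statements merged into one kernel-verified Lean document; each statement's English description precedes it below -/
import Mathlib

section
/- Let G = (V,E) be a finite self-loopless directed graph and I ⊆ V. Then I fills V if and only if A(G) ⊆ I and I intersects every minimal cycle of G (a cycle containing no other cycle as a proper subset). -/
/-!
A filling set must contain every source, since nothing determines a source, and it must meet
every cycle, since no vertex of a cycle avoiding `I` is ever determined: each has a predecessor
on the cycle that is not determined earlier.

Conversely, in a finite graph the closure `I_n` stabilises at some `D` with `Dtm D ⊆ D`. If
`D ≠ V`, every vertex outside `D` is not a source and not determined by `D`, so it has a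
predecessor outside `D`. Walking backwards outside `D` must revisit a vertex, which yields a
cycle disjoint from `D`, and hence a minimal cycle disjoint from `I ⊆ D`.
-/

/-- Incoming vertices of `v` w.r.t. edge relation `E`. -/
def inSet {V : Type*} (E : V → V → Prop) (v : V) : Set V := {w | E w v}

/-- Vertices (completely) determined by `S`. -/
def Dtm {V : Type*} (E : V → V → Prop) (S : Set V) : Set V :=
  {v | (inSet E v).Nonempty ∧ inSet E v ⊆ S}

/-- Iterated determination closure. -/
def dcl {V : Type*} (E : V → V → Prop) (I : Set V) : ℕ → Set V
  | 0 => I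
  | n + 1 => dcl E I n ∪ Dtm E (dcl E I n)

/-- `I` fills the vertex set. -/
def Fills {V : Type*} (E : V → V → Prop) (I : Set V) : Prop :=
  ∃ n, dcl E I n = Set.univ

/-- `C` is (the vertex image of) a directed closed walk of positive length. -/
def IsCycle {V : Type*} (E : V → V → Prop) (C : Set V) : Prop :=
  ∃ (n : ℕ) (p : ℕ → V), 1 ≤ n ∧ p 0 = p n ∧ (∀ k < n, E (p k) (p (k + 1))) ∧
    C = p '' {k | k ≤ n}

/-- A cycle containing no other cycle as a proper subset. -/
def MinCycle {V : Type*} (E : V → V → Prop) (C : Set V) : Prop :=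
  IsCycle E C ∧ ∀ C' ⊆ C, IsCycle E C' → C' = C

open Set

section

variable {V : Type*} {E : V → V → Prop}

theorem dcl_mono (I : Set V) : Monotone (dcl E I) :=
  monotone_nat_of_le_succ fun _ => subset_union_left

theorem subset_dcl (I : Set V) (n : ℕ) : I ⊆ dcl E I n :=
  dcl_mono I (Nat.zero_le n)

variable (E) in
theorem exists_dcl_succ_eq [Finite V] (I : Set V) :
    ∃ N, dcl E I (N + 1) = dcl E I N := by
  obtain ⟨N, hN⟩ := WellFoundedGT.monotone_chain_condition ⟨dcl E I, dcl_mono I⟩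
  exact ⟨N, (hN (N + 1) N.le_succ).symm⟩

theorem mem_of_mem_dcl_of_inSet_eq_empty {I : Set V} {v : V} (hv : inSet E v = ∅) :
    ∀ {n}, v ∈ dcl E I n → v ∈ I
  | 0, h => h
  | _ + 1, .inl h => mem_of_mem_dcl_of_inSet_eq_empty hv h
  | _ + 1, .inr h => absurd hv h.1.ne_empty

theorem disjoint_dcl_of_forall_pred {I C : Set V} (hC : ∀ v ∈ C, ∃ w ∈ C, E w v)
    (hCI : Disjoint C I) : ∀ n, Disjoint C (dcl E I n)
  | 0 => hCI
  | n + 1 => by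
    refine disjoint_union_right.2 ⟨disjoint_dcl_of_forall_pred hC hCI n, ?_⟩
    refine disjoint_left.2 fun v hvC hvD => ?_
    obtain ⟨w, hwC, hwv⟩ := hC v hvC
    exact disjoint_left.1 (disjoint_dcl_of_forall_pred hC hCI n) hwC (hvD.2 hwv)

theorem IsCycle.exists_pred {C : Set V} (hC : IsCycle E C) : ∀ v ∈ C, ∃ w ∈ C, E w v := by
  obtain ⟨n, p, hn, hclosed, hedge, rfl⟩ := hC
  rintro _ ⟨k, hk, rfl⟩
  obtain ⟨j, hj, hjk⟩ : ∃ j < n, p (j + 1) = p k := by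
    rcases k with _ | k
    · exact ⟨n - 1, by omega, by rw [Nat.sub_add_cancel hn, hclosed]⟩
    · exact ⟨k, hk, rfl⟩
  exact ⟨p j, mem_image_of_mem p (show j ≤ n by omega), hjk ▸ hedge j hj⟩

theorem IsCycle.nonempty {C : Set V} (hC : IsCycle E C) : C.Nonempty := by
  obtain ⟨n, p, -, -, -, rfl⟩ := hC
  exact ⟨p 0, mem_image_of_mem p (Nat.zero_le n)⟩

theorem IsCycle.exists_minCycle_subset [Finite V] {C : Set V} (hC : IsCycle E C) :
    ∃ C' ⊆ C, MinCycle E C' := by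
  obtain ⟨C', ⟨hC'C, hC'⟩, hmin⟩ :=
    wellFounded_lt.has_min {C' | C' ⊆ C ∧ IsCycle E C'} ⟨C, subset_rfl, hC⟩
  refine ⟨C', hC'C, hC', fun C'' hC''C' hC'' => ?_⟩
  by_contra hne
  exact hmin C'' ⟨hC''C'.trans hC'C, hC''⟩ (hC''C'.ssubset_of_ne hne)

theorem isCycle_image_Icc_of_pred_walk {g : ℕ → V} (hg : ∀ k, E (g (k + 1)) (g k)) {i j : ℕ}
    (hij : i < j) (hgij : g i = g j) : IsCycle E (g '' Icc i j) := by
  refine ⟨j - i, fun k => g (j - k), by omega, by simp [Nat.sub_sub_self hij.le, hgij], ?_, ?_⟩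
  · intro k hk
    have hsucc : j - k = j - (k + 1) + 1 := by omega
    simpa only [hsucc] using hg (j - (k + 1))
  · ext x
    constructor
    · rintro ⟨m, ⟨him, hmj⟩, rfl⟩
      exact ⟨j - m, (by omega : j - m ≤ j - i), congrArg g (Nat.sub_sub_self hmj)⟩
    · rintro ⟨k, hk, rfl⟩
      have hk : k ≤ j - i := hk
      exact ⟨j - k, ⟨by omega, by omega⟩, rfl⟩

theorem exists_isCycle_subset_of_forall_pred [Finite V] {S : Set V} (hS : S.Nonempty)
    (hpred : ∀ v ∈ S, ∃ w ∈ S, E w v) : ∃ C ⊆ S, IsCycle E C := by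
  obtain ⟨v₀, hv₀⟩ := hS
  choose f hfS hfE using hpred
  let step : S → S := fun v => ⟨f v v.2, hfS v v.2⟩
  let g : ℕ → V := fun k => (step^[k] ⟨v₀, hv₀⟩ : S)
  have hg : ∀ k, E (g (k + 1)) (g k) := fun k => by
    simp only [g, Function.iterate_succ_apply']
    exact hfE _ _
  obtain ⟨a, b, hab, hgab⟩ :=
    Finite.exists_ne_map_eq_of_infinite fun k => step^[k] ⟨v₀, hv₀⟩
  obtain ⟨i, j, hij, hgij⟩ : ∃ i j, i < j ∧ g i = g j := by
    rcases hab.lt_or_gt with hlt | hlt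
    · exact ⟨a, b, hlt, congrArg Subtype.val hgab⟩
    · exact ⟨b, a, hlt, congrArg Subtype.val hgab.symm⟩
  exact ⟨g '' Icc i j, image_subset_iff.2 fun k _ => (step^[k] _).2,
    isCycle_image_Icc_of_pred_walk hg hij hgij⟩

theorem exists_pred_compl_of_dtm_subset {D : Set V} (hsrc : {v | inSet E v = ∅} ⊆ D)
    (hD : Dtm E D ⊆ D) : ∀ v ∈ Dᶜ, ∃ w ∈ Dᶜ, E w v := by
  intro v hv
  by_contra! hall
  refine hv (hD ⟨nonempty_iff_ne_empty.2 fun h => hv (hsrc h), fun w hw => ?_⟩)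
  by_contra hwD
  exact hall w hwD hw

end

theorem chara1_minimal_general {V : Type*} [Fintype V] (E : V → V → Prop)
    (I : Set V) :
    Fills E I ↔
      ({v : V | inSet E v = ∅} ⊆ I ∧ ∀ C : Set V, MinCycle E C → (C ∩ I).Nonempty) := by
  constructor
  · rintro ⟨n, hn⟩
    refine ⟨fun v hv => mem_of_mem_dcl_of_inSet_eq_empty hv (hn ▸ mem_univ v), fun C hC => ?_⟩
    rw [inter_nonempty_iff_exists_right]
    by_contra! hCI
    have hdisj := disjoint_dcl_of_forall_pred hC.1.exists_pred (disjoint_right.2 hCI) n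
    rw [hn, disjoint_univ] at hdisj
    exact hC.1.nonempty.ne_empty hdisj
  · rintro ⟨hsrc, hcyc⟩
    obtain ⟨N, hN⟩ := exists_dcl_succ_eq E I
    refine ⟨N, eq_univ_of_forall fun v => ?_⟩
    by_contra hv
    have hpred := exists_pred_compl_of_dtm_subset (hsrc.trans (subset_dcl I N))
      (subset_union_right.trans hN.le)
    obtain ⟨C, hCD, hC⟩ := exists_isCycle_subset_of_forall_pred ⟨v, hv⟩ hpred
    obtain ⟨C', hC'C, hC'⟩ := hC.exists_minCycle_subset
    obtain ⟨x, hxC', hxI⟩ := hcyc C' hC'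
    exact hCD (hC'C hxC') (subset_dcl I N hxI)

theorem chara1_minimal {V : Type*} [Fintype V] (E : V → V → Prop)
    (hloopless : ∀ v, ¬ E v v) (I : Set V) :
    Fills E I ↔
      ({v : V | inSet E v = ∅} ⊆ I ∧ ∀ C : Set V, MinCycle E C → (C ∩ I).Nonempty) :=
  chara1_minimal_general E I
end

section
/- Let G = (V,E) be a finite self-loopless directed graph. Then all minimal (with respect to inclusion) p-filling subsets of V have the same cardinality, equal to the number of strongly connected components of G with no incoming edges in the condensation G/≃; moreover every minimal p-filling subset intersects each such component in exactly one vertex. -/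
/-- Vertices p-determined by `S`. -/
def pDtm {V : Type*} (E : V → V → Prop) (S : Set V) : Set V :=
  {v | (inSet E v ∩ S).Nonempty}

/-- Iterated p-determination closure. -/
def pdcl {V : Type*} (E : V → V → Prop) (I : Set V) : ℕ → Set V
  | 0 => I
  | n + 1 => pdcl E I n ∪ pDtm E (pdcl E I n)

/-- `I` p-fills the vertex set. -/
def PFills {V : Type*} (E : V → V → Prop) (I : Set V) : Prop :=
  ∃ n, pdcl E I n = Set.univ

/-- `x` and `y` are strongly connected. -/
def SConn {V : Type*} (E : V → V → Prop) (x y : V) : Prop :=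
  Relation.ReflTransGen E x y ∧ Relation.ReflTransGen E y x

/-- `C` is a strongly connected component, i.e. an equivalence class of `SConn`. -/
def IsSCC {V : Type*} (E : V → V → Prop) (C : Set V) : Prop :=
  ∃ x : V, C = {y | SConn E x y}

/-- Edge relation of the condensation graph, on strongly connected components. -/
def sccEdge {V : Type*} (E : V → V → Prop) (C D : Set V) : Prop :=
  IsSCC E C ∧ IsSCC E D ∧ C ≠ D ∧ ∃ c ∈ C, ∃ d ∈ D, E c d

/-- A p-filling set none of whose proper subsets is p-filling. -/
def MinPFilling {V : Type*} (E : V → V → Prop) (I : Set V) : Prop :=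
  PFills E I ∧ ∀ J ⊂ I, ¬ PFills E J

/-!
A set `I` p-fills the graph exactly when every vertex is reachable from `I`. Every vertex is
reachable from a strongly connected component without incoming edges, and such a component can
only be reached from inside, so a p-filling set meets every such component. Conversely, in a
minimal p-filling set no member is reachable from another member (it could be dropped), which
forces each member to lie in a component without incoming edges and each such component to
contain only one member. Hence sending a vertex to its component is a bijection from `I` onto
these components.
-/

open Relation

section

variable {V : Type*} {E : V → V → Prop}

def NoIncoming (E : V → V → Prop) (C : Set V) : Prop :=
  ∀ x ∉ C, ∀ c ∈ C, ¬ E x c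

namespace SConn

theorem refl (x : V) : SConn E x x := ⟨ReflTransGen.refl, ReflTransGen.refl⟩

theorem symm {x y : V} (h : SConn E x y) : SConn E y x := ⟨h.2, h.1⟩

theorem trans {x y z : V} (h₁ : SConn E x y) (h₂ : SConn E y z) : SConn E x z :=
  ⟨h₁.1.trans h₂.1, h₂.2.trans h₁.2⟩

theorem setOf_eq {x y : V} (h : SConn E x y) : {z | SConn E x z} = {z | SConn E y z} :=
  Set.ext fun _ => ⟨h.symm.trans, h.trans⟩

end SConn

section PFills

variable {I : Set V}

theorem pdcl_mono : Monotone (pdcl E I) :=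
  monotone_nat_of_le_succ fun _ => Set.subset_union_left

theorem exists_reflTransGen_of_mem_pdcl {n : ℕ} {v : V} (hv : v ∈ pdcl E I n) :
    ∃ i ∈ I, ReflTransGen E i v := by
  induction n generalizing v with
  | zero => exact ⟨v, hv, ReflTransGen.refl⟩
  | succ n ih =>
    rcases hv with hv | ⟨w, hwv, hw⟩
    · exact ih hv
    · obtain ⟨i, hi, hiw⟩ := ih hw
      exact ⟨i, hi, hiw.tail hwv⟩

theorem exists_mem_pdcl_of_reflTransGen {i v : V} (hi : i ∈ I) (h : ReflTransGen E i v) :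
    ∃ n, v ∈ pdcl E I n := by
  induction h with
  | refl => exact ⟨0, hi⟩
  | tail _ hwv ih =>
    obtain ⟨n, hn⟩ := ih
    exact ⟨n + 1, Or.inr ⟨_, hwv, hn⟩⟩

theorem pfills_iff [Finite V] : PFills E I ↔ ∀ v, ∃ i ∈ I, ReflTransGen E i v := by
  refine ⟨fun ⟨n, hn⟩ v => exists_reflTransGen_of_mem_pdcl (hn ▸ Set.mem_univ v), fun h => ?_⟩
  choose i hi hiv using h
  choose f hf using fun v => exists_mem_pdcl_of_reflTransGen (hi v) (hiv v)
  obtain ⟨N, hN⟩ := (Set.finite_range f).bddAbove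
  exact ⟨N, Set.eq_univ_of_forall fun v => pdcl_mono (hN ⟨v, rfl⟩) (hf v)⟩

end PFills

theorem NoIncoming.mem_of_reflTransGen {C : Set V} (hC : NoIncoming E C) {u v : V}
    (h : ReflTransGen E u v) (hv : v ∈ C) : u ∈ C := by
  induction h using ReflTransGen.head_induction_on with
  | refl => exact hv
  | head hxy _ ih => exact by_contra fun hx => hC _ hx _ ih hxy

/-- Take `u` minimal for strict reachability among the vertices reaching `v`: an edge into
the component of `u` from outside would give a strictly smaller such vertex. -/
theorem exists_reflTransGen_noIncoming [Finite V] (v : V) :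
    ∃ u, ReflTransGen E u v ∧ NoIncoming E {y | SConn E u y} := by
  let R : V → V → Prop := fun x y => ReflTransGen E x y ∧ ¬ ReflTransGen E y x
  have hwf : WellFounded R := by
    have : IsTrans V R := ⟨fun _ _ _ h₁ h₂ => ⟨h₁.1.trans h₂.1, fun h => h₁.2 (h₂.1.trans h)⟩⟩
    have : Std.Irrefl R := ⟨fun _ h => h.2 ReflTransGen.refl⟩
    exact Finite.wellFounded_of_trans_of_irrefl R
  obtain ⟨u, huv, hmin⟩ := hwf.has_min {u | ReflTransGen E u v} ⟨v, ReflTransGen.refl⟩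
  refine ⟨u, huv, fun x hx c hc hxc => ?_⟩
  have hxu : ReflTransGen E x u := (ReflTransGen.single hxc).trans hc.2
  exact hmin x (hxu.trans huv) ⟨hxu, fun hux => hx ⟨hux, hxu⟩⟩

theorem PFills.exists_mem_of_noIncoming [Finite V] {I C : Set V} (hI : PFills E I)
    (hC : NoIncoming E C) {x : V} (hx : x ∈ C) : ∃ i ∈ I, i ∈ C := by
  obtain ⟨i, hi, hix⟩ := pfills_iff.1 hI x
  exact ⟨i, hi, hC.mem_of_reflTransGen hix hx⟩

namespace MinPFilling

variable [Finite V] {I : Set V} (hI : MinPFilling E I)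
include hI

/-- Otherwise `I \ {j}` would still p-fill, since everything reached from `j` is reached
from `i`. -/
theorem not_reflTransGen {i j : V} (hi : i ∈ I) (hj : j ∈ I) (hij : i ≠ j) :
    ¬ ReflTransGen E i j := by
  intro hr
  refine hI.2 (I \ {j}) (Set.sdiff_singleton_ssubset.2 hj) (pfills_iff.2 fun w => ?_)
  obtain ⟨k, hk, hkw⟩ := pfills_iff.1 hI.1 w
  by_cases hkj : k = j
  · exact ⟨i, ⟨hi, hij⟩, hr.trans (hkj ▸ hkw)⟩
  · exact ⟨k, ⟨hk, hkj⟩, hkw⟩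

theorem eq_of_sconn {i j : V} (hi : i ∈ I) (hj : j ∈ I) (h : SConn E i j) : i = j :=
  by_contra fun hij => hI.not_reflTransGen hi hj hij h.1

theorem noIncoming_setOf_sconn {v : V} (hv : v ∈ I) : NoIncoming E {y | SConn E v y} := by
  obtain ⟨u, huv, hu⟩ := exists_reflTransGen_noIncoming (E := E) v
  obtain ⟨i, hi, hui⟩ := hI.1.exists_mem_of_noIncoming hu (SConn.refl u)
  have hiv : i = v := by_contra fun hiv => hI.not_reflTransGen hi hv hiv (hui.2.trans huv)
  rw [← SConn.setOf_eq (hiv ▸ hui)]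
  exact hu

end MinPFilling

end

theorem minimal_pfilling_cardinality_general {V : Type*} [Fintype V] (E : V → V → Prop)
    (I : Set V) (hI : MinPFilling E I) :
    I.ncard = {C : Set V | IsSCC E C ∧ ∀ x ∉ C, ∀ c ∈ C, ¬ E x c}.ncard ∧
      ∀ C : Set V, IsSCC E C → (∀ x ∉ C, ∀ c ∈ C, ¬ E x c) → (I ∩ C).ncard = 1 := by
  have hinj : Set.InjOn (fun v => {y | SConn E v y}) I := fun v hv w hw hvw =>
    hI.eq_of_sconn hv hw (Set.ext_iff.1 hvw w |>.2 (SConn.refl w))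
  have himage : (fun v => {y | SConn E v y}) '' I =
      {C : Set V | IsSCC E C ∧ ∀ x ∉ C, ∀ c ∈ C, ¬ E x c} := by
    ext C
    constructor
    · rintro ⟨v, hv, rfl⟩
      exact ⟨⟨v, rfl⟩, hI.noIncoming_setOf_sconn hv⟩
    · rintro ⟨⟨x, rfl⟩, hC⟩
      obtain ⟨i, hi, hxi⟩ := hI.1.exists_mem_of_noIncoming hC (SConn.refl x)
      exact ⟨i, hi, (SConn.setOf_eq hxi).symm⟩
  refine ⟨himage ▸ hinj.ncard_image.symm, ?_⟩
  rintro C ⟨x, rfl⟩ hC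
  obtain ⟨i, hi, hxi⟩ := hI.1.exists_mem_of_noIncoming hC (SConn.refl x)
  refine Set.ncard_eq_one.2 ⟨i, Set.eq_singleton_iff_unique_mem.2 ⟨⟨hi, hxi⟩, ?_⟩⟩
  exact fun j ⟨hj, hxj⟩ => hI.eq_of_sconn hj hi (hxj.symm.trans hxi)

theorem minimal_pfilling_cardinality {V : Type*} [Fintype V] (E : V → V → Prop)
    (hloopless : ∀ v, ¬ E v v) (I : Set V) (hI : MinPFilling E I) :
    I.ncard = {C : Set V | IsSCC E C ∧ ∀ x ∉ C, ∀ c ∈ C, ¬ E x c}.ncard ∧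
      ∀ C : Set V, IsSCC E C → (∀ x ∉ C, ∀ c ∈ C, ¬ E x c) → (I ∩ C).ncard = 1 :=
  minimal_pfilling_cardinality_general E I hI
end
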